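/- Let c, s, τ be positive integers with 1 ≤ τ ≤ s, set d = c·s and s₁ = max(1, s−1). Let A be an n×d real matrix whose columns are indexed by pairs (l,i) ∈ {1,…,c}×{1,…,s}, with no zero rows. Let M = AᵀA, D^M its diagonal part, B^M its block-diagonal part with respect to the c blocks, and define σ = sup{xᵀMx : xᵀD^M x ≤ 1} and σ' = sup{xᵀMx : xᵀB^M x ≤ 1}. Define β* = 1 + (τ−1)(σ−1)/s₁ + (τ/s − (τ−1)/s₁)·((σ'−1)/σ')·σ. Then for every h ∈ ℝ^d, the average over all distributed samplings of (h^Ŝ)ᵀAᵀA h^Ŝ is at most (τ/s)·β*·∑_{i=1}^d (∑_{j=1}^n A_{ji}²) h_i². -/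

import Mathlib

open Finset

/-- The finite set of all distributed samplings: tuples `S = (S_1,…,S_c)` where
each `S_l` is a `τ`-element subset of the block `{1,…,s}`. -/
def samplings (c s τ : ℕ) : Finset (Fin c → Finset (Fin s)) :=
  Finset.univ.filter fun S => ∀ l, (S l).card = τ

/-- `h^Ŝ`: the vector agreeing with `h` on `Ŝ = {(l,i) : i ∈ S_l}` and `0` elsewhere. -/
def restr {c s : ℕ} (S : Fin c → Finset (Fin s)) (x : Fin c × Fin s → ℝ) :
    Fin c × Fin s → ℝ :=
  fun p => if p.2 ∈ S p.1 then x p else 0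


/-!
Expanding the quadratic form, `E[(h^Ŝ)ᵀ G h^Ŝ] = ∑_{p,q} G_pq h_p h_q P(p ∈ Ŝ, q ∈ Ŝ)`. The blocks
of a distributed sampling are independent uniform `τ`-subsets of `{1,…,s}`, so this probability
is `τ/s` for `p = q`, `(τ/s)(τ-1)/(s-1)` for distinct `p, q` in one block and `(τ/s)²` across
blocks. Writing `d`, `b`, `m` for `hᵀD^M h`, `hᵀB^M h`, `hᵀMh`, the average is therefore
`(τ/s) d + (τ/s)(τ-1)/(s-1) (b - d) + (τ/s)² (m - b)`.
By homogeneity of the three forms, `m ≤ σ d` and `m ≤ σ' b`; the second bounds `m - b` by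
`(1 - 1/σ') m`, and the first then bounds everything by `(τ/s) β* d`.
-/
open Matrix
open scoped BigOperators

section Subsets

variable {α : Type*} [DecidableEq α] [Fintype α]

lemma expect_powersetCard_ite_mem (i : α) {k : ℕ} (hk : k ≤ Fintype.card α) :
    𝔼 T ∈ powersetCard k univ, (if i ∈ T then 1 else 0 : ℝ) = k / Fintype.card α := by
  have hN : ((Fintype.card α).choose k : ℝ) ≠ 0 := by exact_mod_cast (Nat.choose_pos hk).ne'
  rw [expect_eq_sum_div_card, sum_boole, card_powersetCard, card_univ]
  rcases k with _ | k
  · simp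
  obtain ⟨n, hn⟩ : ∃ n, Fintype.card α = n + 1 :=
    Nat.exists_eq_add_one.2 (Fintype.card_pos_iff.2 ⟨i⟩)
  have hcount : #{T ∈ powersetCard (k + 1) univ | i ∈ T} = n.choose k := by
    simpa [hn] using card_filter_powersetCard_subset {i} univ (k + 1) (by simp) (by simp)
  rw [hcount, hn, div_eq_div_iff (by rwa [hn] at hN) (by positivity)]
  have hR : (n.choose k : ℝ) * (n + 1) = (n + 1).choose (k + 1) * (k + 1) := by
    exact_mod_cast (by linarith [Nat.add_one_mul_choose_eq n k] :
      n.choose k * (n + 1) = (n + 1).choose (k + 1) * (k + 1))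
  push_cast
  linear_combination hR

lemma expect_powersetCard_ite_mem_and_mem {i i' : α} (hii' : i ≠ i') {k : ℕ}
    (hk : k ≤ Fintype.card α) :
    𝔼 T ∈ powersetCard k univ, (if i ∈ T ∧ i' ∈ T then 1 else 0 : ℝ) =
      k / Fintype.card α * ((k - 1) / (Fintype.card α - 1)) := by
  have hN : ((Fintype.card α).choose k : ℝ) ≠ 0 := by exact_mod_cast (Nat.choose_pos hk).ne'
  rw [expect_eq_sum_div_card, sum_boole, card_powersetCard, card_univ]
  rcases k with _ | _ | k
  · simp
  · have hempty : {T ∈ powersetCard 1 (univ : Finset α) | i ∈ T ∧ i' ∈ T} = ∅ :=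
      filter_eq_empty_iff.2 fun T hT hmem =>
        hii' (card_le_one.1 (mem_powersetCard.1 hT).2.le _ hmem.1 _ hmem.2)
    simp [hempty]
  obtain ⟨n, hn⟩ : ∃ n, Fintype.card α = n + 2 := by
    have := Fintype.one_lt_card_iff.2 ⟨i, i', hii'⟩
    exact ⟨Fintype.card α - 2, by omega⟩
  have hcount : #{T ∈ powersetCard (k + 2) univ | i ∈ T ∧ i' ∈ T} = n.choose k := by
    simpa [hn, hii', insert_subset_iff] using
      card_filter_powersetCard_subset {i, i'} univ (k + 2) (by simp) (by simp [card_pair hii'])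
  rw [hcount, hn, div_mul_div_comm, div_eq_div_iff (by rwa [hn] at hN) (by push_cast; nlinarith)]
  have hR : (n.choose k : ℝ) * ((n + 2) * (n + 1)) =
      (n + 2).choose (k + 2) * ((k + 2) * (k + 1)) := by
    exact_mod_cast (by nlinarith [Nat.add_one_mul_choose_eq n k,
      Nat.add_one_mul_choose_eq (n + 1) (k + 1)] : n.choose k * ((n + 2) * (n + 1)) =
      (n + 2).choose (k + 2) * ((k + 2) * (k + 1)))
  push_cast
  linear_combination hR

end Subsets

lemma expect_piFinset_prod {ι κ : Type*} [Fintype ι] [DecidableEq ι] (t : ι → Finset κ)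
    (f : ι → κ → ℝ) :
    𝔼 S ∈ Fintype.piFinset t, ∏ i, f i (S i) = ∏ i, 𝔼 x ∈ t i, f i x := by
  simp only [expect_eq_sum_div_card, Fintype.card_piFinset, Nat.cast_prod, prod_div_distrib,
    prod_univ_sum]

lemma le_sSup_mul_of_le_mul {E : Type*} [SMul ℝ E] {Q R : E → ℝ}
    (hQ : ∀ (t : ℝ) x, Q (t • x) = t ^ 2 * Q x) (hR : ∀ (t : ℝ) x, R (t • x) = t ^ 2 * R x)
    (hR0 : ∀ x, 0 ≤ R x) {K : ℝ} (hK0 : 0 ≤ K) (hK : ∀ x, Q x ≤ K * R x) (x : E) :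
    Q x ≤ sSup {y | ∃ x, R x ≤ 1 ∧ y = Q x} * R x := by
  have hbdd : BddAbove {y | ∃ x, R x ≤ 1 ∧ y = Q x} := by
    refine ⟨K, ?_⟩
    rintro _ ⟨x, hx, rfl⟩
    nlinarith [hK x]
  rcases (hR0 x).eq_or_lt with h0 | hpos
  · simpa [← h0] using hK x
  have ht : (√(R x))⁻¹ ^ 2 = (R x)⁻¹ := by rw [inv_pow, Real.sq_sqrt hpos.le]
  have hmem : Q x / R x ∈ {y | ∃ x, R x ≤ 1 ∧ y = Q x} :=
    ⟨(√(R x))⁻¹ • x, by rw [hR, ht, inv_mul_cancel₀ hpos.ne'], by rw [hQ, ht, div_eq_inv_mul]⟩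
  exact (div_le_iff₀ hpos).1 (le_csSup hbdd hmem)

lemma exists_transpose_mul_self_apply_self_pos {ι m : Type*} [Fintype m] {A : Matrix m ι ℝ}
    (hA : A ≠ 0) : ∃ p, 0 < (Aᵀ * A) p p := by
  obtain ⟨j, p, hjp⟩ : ∃ j p, A j p ≠ 0 := by
    by_contra! hz
    exact hA (Matrix.ext hz)
  refine ⟨p, ?_⟩
  simp only [mul_apply, transpose_apply]
  exact sum_pos' (fun _ _ => mul_self_nonneg _) ⟨j, mem_univ j, mul_self_pos.2 hjp⟩

section QuadraticForms

variable {ι : Type*} [Fintype ι]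

lemma dotProduct_mulVec_eq_sum {R : Type*} [CommSemiring R] (G : Matrix ι ι R) (x y : ι → R) :
    x ⬝ᵥ G *ᵥ y = ∑ p, ∑ q, G p q * (x p * y q) := by
  simp only [dotProduct, mulVec, mul_sum]
  exact sum_congr rfl fun p _ => sum_congr rfl fun q _ => by ring

lemma smul_dotProduct_mulVec_smul (G : Matrix ι ι ℝ) (t : ℝ) (x : ι → ℝ) :
    (t • x) ⬝ᵥ G *ᵥ (t • x) = t ^ 2 * (x ⬝ᵥ G *ᵥ x) := by
  rw [mulVec_smul, dotProduct_smul, smul_dotProduct, smul_eq_mul, smul_eq_mul]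
  ring

variable {m : Type*} [Fintype m] (A : Matrix m ι ℝ)

lemma dotProduct_transpose_mul_mulVec (x : ι → ℝ) :
    x ⬝ᵥ (Aᵀ * A) *ᵥ x = ∑ j, (∑ p, A j p * x p) ^ 2 := by
  rw [← mulVec_mulVec, dotProduct_mulVec, vecMul_transpose]
  simp [dotProduct, mulVec, sq]

lemma dotProduct_diagonal_diag_transpose_mul_mulVec [DecidableEq ι] (x : ι → ℝ) :
    x ⬝ᵥ diagonal (Aᵀ * A).diag *ᵥ x = ∑ p, (∑ j, A j p ^ 2) * x p ^ 2 := by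
  simp only [dotProduct, mulVec_diagonal, diag_apply, mul_apply, transpose_apply]
  exact sum_congr rfl fun p _ => by simp only [sq]; ring

lemma dotProduct_transpose_mul_mulVec_le_card_mul [DecidableEq ι] (x : ι → ℝ) :
    x ⬝ᵥ (Aᵀ * A) *ᵥ x ≤ Fintype.card ι * (x ⬝ᵥ diagonal (Aᵀ * A).diag *ᵥ x) := by
  rw [dotProduct_transpose_mul_mulVec, dotProduct_diagonal_diag_transpose_mul_mulVec]
  calc ∑ j, (∑ p, A j p * x p) ^ 2 ≤ ∑ j, Fintype.card ι * ∑ p, (A j p * x p) ^ 2 :=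
        sum_le_sum fun j _ => sq_sum_le_card_mul_sum_sq
    _ = _ := by
        rw [← mul_sum, sum_comm]
        simp only [mul_pow, sum_mul]

lemma dotProduct_transpose_mul_mulVec_le_sSup_mul [DecidableEq ι] (x : ι → ℝ) :
    x ⬝ᵥ (Aᵀ * A) *ᵥ x ≤
      sSup {y | ∃ x, x ⬝ᵥ diagonal (Aᵀ * A).diag *ᵥ x ≤ 1 ∧ y = x ⬝ᵥ (Aᵀ * A) *ᵥ x} *
        (x ⬝ᵥ diagonal (Aᵀ * A).diag *ᵥ x) :=
  le_sSup_mul_of_le_mul (smul_dotProduct_mulVec_smul _) (smul_dotProduct_mulVec_smul _)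
    (fun x => by rw [dotProduct_diagonal_diag_transpose_mul_mulVec]; positivity)
    (Nat.cast_nonneg _) (dotProduct_transpose_mul_mulVec_le_card_mul A) x

end QuadraticForms

/-- The paper's `B^G`; its `D^G` is `diagonal G.diag`. -/
def blockDiagPart {ι κ R : Type*} [DecidableEq ι] [Zero R] (G : Matrix (ι × κ) (ι × κ) R) :
    Matrix (ι × κ) (ι × κ) R :=
  Matrix.of fun p q => if p.1 = q.1 then G p q else 0

section BlockDiagonal

variable {ι κ m : Type*} [Fintype ι] [Fintype κ] [Fintype m] [DecidableEq ι]

lemma one_le_of_le_mul_blockDiagPart [DecidableEq κ] {G : Matrix (ι × κ) (ι × κ) ℝ}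
    {p : ι × κ} (hp : 0 < G p p) {σ' : ℝ}
    (h : ∀ x, x ⬝ᵥ G *ᵥ x ≤ σ' * (x ⬝ᵥ blockDiagPart G *ᵥ x)) : 1 ≤ σ' := by
  have := h (Pi.single p 1)
  simp only [single_one_dotProduct, mulVec_single_one, col_apply, blockDiagPart, of_apply,
    if_true] at this
  exact le_of_mul_le_mul_right (by linarith) hp

variable (A : Matrix m (ι × κ) ℝ)

lemma dotProduct_blockDiagPart_transpose_mul_mulVec (x : ι × κ → ℝ) :
    x ⬝ᵥ blockDiagPart (Aᵀ * A) *ᵥ x = ∑ l, ∑ j, (∑ i, A j (l, i) * x (l, i)) ^ 2 := by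
  simp only [dotProduct_mulVec_eq_sum, blockDiagPart, of_apply, mul_apply, transpose_apply,
    Fintype.sum_prod_type, ite_mul, zero_mul, sq, sum_mul_sum]
  refine sum_congr rfl fun l _ => ?_
  rw [sum_comm]
  simp only [sum_ite_irrel, sum_const_zero, sum_ite_eq, mem_univ, if_true, sum_mul]
  symm
  rw [sum_comm]
  refine sum_congr rfl fun i _ => ?_
  rw [sum_comm]
  exact sum_congr rfl fun i' _ => sum_congr rfl fun j _ => by ring

lemma dotProduct_transpose_mul_mulVec_le_card_mul_blockDiagPart (x : ι × κ → ℝ) :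
    x ⬝ᵥ (Aᵀ * A) *ᵥ x ≤ Fintype.card ι * (x ⬝ᵥ blockDiagPart (Aᵀ * A) *ᵥ x) := by
  rw [dotProduct_transpose_mul_mulVec, dotProduct_blockDiagPart_transpose_mul_mulVec]
  calc ∑ j, (∑ p, A j p * x p) ^ 2
      ≤ ∑ j, Fintype.card ι * ∑ l, (∑ i, A j (l, i) * x (l, i)) ^ 2 :=
        sum_le_sum fun j _ => by
          rw [Fintype.sum_prod_type, ← card_univ]
          exact sq_sum_le_card_mul_sum_sq
    _ = _ := by rw [← mul_sum, sum_comm]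

lemma dotProduct_transpose_mul_mulVec_le_sSup_mul_blockDiagPart (x : ι × κ → ℝ) :
    x ⬝ᵥ (Aᵀ * A) *ᵥ x ≤
      sSup {y | ∃ x, x ⬝ᵥ blockDiagPart (Aᵀ * A) *ᵥ x ≤ 1 ∧ y = x ⬝ᵥ (Aᵀ * A) *ᵥ x} *
        (x ⬝ᵥ blockDiagPart (Aᵀ * A) *ᵥ x) :=
  le_sSup_mul_of_le_mul (smul_dotProduct_mulVec_smul _) (smul_dotProduct_mulVec_smul _)
    (fun x => by rw [dotProduct_blockDiagPart_transpose_mul_mulVec]; positivity)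
    (Nat.cast_nonneg _) (dotProduct_transpose_mul_mulVec_le_card_mul_blockDiagPart A) x

end BlockDiagonal

section Samplings

variable {c s τ : ℕ}

lemma samplings_eq_piFinset :
    samplings c s τ = Fintype.piFinset fun _ => powersetCard τ univ := by
  ext S
  simp [samplings]

lemma card_samplings : #(samplings c s τ) = s.choose τ ^ c := by
  simp [samplings_eq_piFinset]

lemma expect_samplings_prod (w : Fin c → Finset (Fin s) → ℝ) :
    𝔼 S ∈ samplings c s τ, ∏ l, w l (S l) = ∏ l, 𝔼 T ∈ powersetCard τ univ, w l T := by
  rw [samplings_eq_piFinset, expect_piFinset_prod]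

lemma expect_samplings_apply (hτs : τ ≤ s) (l : Fin c) (f : Finset (Fin s) → ℝ) :
    𝔼 S ∈ samplings c s τ, f (S l) = 𝔼 T ∈ powersetCard τ univ, f T := by
  have hne : (powersetCard τ (univ : Finset (Fin s))).Nonempty := by simpa using hτs
  let w m T := if m = l then f T else 1
  have hw : ∀ m, 𝔼 T ∈ powersetCard τ univ, w m T =
      if m = l then 𝔼 T ∈ powersetCard τ univ, f T else 1 := by
    intro m
    by_cases hm : m = l <;> simp [w, hm, expect_const hne]
  calc 𝔼 S ∈ samplings c s τ, f (S l)
      = 𝔼 S ∈ samplings c s τ, ∏ m, w m (S m) := by simp only [w, Fintype.prod_ite_eq']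
    _ = _ := by simp only [expect_samplings_prod, hw, Fintype.prod_ite_eq']

lemma expect_samplings_apply_mul_apply (hτs : τ ≤ s) {l l' : Fin c} (hll' : l ≠ l')
    (f g : Finset (Fin s) → ℝ) :
    𝔼 S ∈ samplings c s τ, f (S l) * g (S l') =
      (𝔼 T ∈ powersetCard τ univ, f T) * 𝔼 T ∈ powersetCard τ univ, g T := by
  have hne : (powersetCard τ (univ : Finset (Fin s))).Nonempty := by simpa using hτs
  let w m T := (if m = l then f T else 1) * (if m = l' then g T else 1)
  have hw : ∀ m, 𝔼 T ∈ powersetCard τ univ, w m T =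
      (if m = l then 𝔼 T ∈ powersetCard τ univ, f T else 1) *
        (if m = l' then 𝔼 T ∈ powersetCard τ univ, g T else 1) := by
    intro m
    by_cases hl : m = l
    · simp [w, hl, hll']
    · by_cases hl' : m = l'
      · simp [w, hl', hll'.symm]
      · simp [w, hl, hl', expect_const hne]
  calc 𝔼 S ∈ samplings c s τ, f (S l) * g (S l')
      = 𝔼 S ∈ samplings c s τ, ∏ m, w m (S m) := by
        simp only [w, prod_mul_distrib, Fintype.prod_ite_eq']
    _ = _ := by simp only [expect_samplings_prod, hw, prod_mul_distrib, Fintype.prod_ite_eq']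

lemma expect_samplings_ite_mem_mul_ite_mem (hτs : τ ≤ s) (p q : Fin c × Fin s) :
    𝔼 S ∈ samplings c s τ, (if p.2 ∈ S p.1 then 1 else 0 : ℝ) * (if q.2 ∈ S q.1 then 1 else 0) =
      if p = q then (τ / s : ℝ)
      else if p.1 = q.1 then τ / s * ((τ - 1) / (s - 1)) else (τ / s) ^ 2 := by
  have hτs' : τ ≤ Fintype.card (Fin s) := by simpa using hτs
  obtain ⟨l, i⟩ := p
  obtain ⟨l', i'⟩ := q
  by_cases hl : l = l'
  · subst hl
    rw [expect_samplings_apply hτs l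
      (fun T => (if i ∈ T then (1 : ℝ) else 0) * (if i' ∈ T then 1 else 0))]
    simp only [ite_zero_mul_ite_zero, mul_one]
    by_cases hi : i = i'
    · subst hi
      simpa using expect_powersetCard_ite_mem i hτs'
    · simpa [hi] using expect_powersetCard_ite_mem_and_mem hi hτs'
  · rw [expect_samplings_apply_mul_apply hτs hl (fun T => if i ∈ T then (1 : ℝ) else 0)
      (fun T => if i' ∈ T then (1 : ℝ) else 0), expect_powersetCard_ite_mem i hτs',
      expect_powersetCard_ite_mem i' hτs']
    simp [hl, sq]

/-- For `s = 1` the factor `(τ - 1) / (s - 1)` is Lean's `0 / 0 = 0`, which is harmless since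
then `blockDiagPart G = diagonal G.diag`. -/
theorem expect_samplings_restr_dotProduct_mulVec (hτs : τ ≤ s)
    (G : Matrix (Fin c × Fin s) (Fin c × Fin s) ℝ) (x : Fin c × Fin s → ℝ) :
    𝔼 S ∈ samplings c s τ, restr S x ⬝ᵥ G *ᵥ restr S x =
      τ / s * (x ⬝ᵥ diagonal G.diag *ᵥ x)
      + τ / s * ((τ - 1) / (s - 1)) * (x ⬝ᵥ blockDiagPart G *ᵥ x - x ⬝ᵥ diagonal G.diag *ᵥ x)
      + (τ / s) ^ 2 * (x ⬝ᵥ G *ᵥ x - x ⬝ᵥ blockDiagPart G *ᵥ x) := by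
  calc 𝔼 S ∈ samplings c s τ, restr S x ⬝ᵥ G *ᵥ restr S x
      = ∑ p, ∑ q, G p q * (x p * x q) * 𝔼 S ∈ samplings c s τ,
          (if p.2 ∈ S p.1 then 1 else 0 : ℝ) * (if q.2 ∈ S q.1 then 1 else 0) := by
        simp only [dotProduct_mulVec_eq_sum, expect_sum_comm, mul_expect]
        refine sum_congr rfl fun p _ => sum_congr rfl fun q _ => expect_congr rfl fun S _ => ?_
        simp only [restr]
        split_ifs <;> ring
    _ = _ := by
        simp only [expect_samplings_ite_mem_mul_ite_mem hτs, dotProduct_mulVec_eq_sum, mul_sum,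
          ← sum_sub_distrib, ← sum_add_distrib]
        refine sum_congr rfl fun p _ => sum_congr rfl fun q _ => ?_
        by_cases hpq : p = q
        · subst hpq
          simp only [blockDiagPart, of_apply, diagonal_apply_eq, diag_apply, if_true]
          ring
        · by_cases hl : p.1 = q.1 <;>
            simp only [blockDiagPart, of_apply, diagonal_apply_ne _ hpq, hpq, hl, if_true,
              if_false] <;> ring

end Samplings

lemma eso_combination_le {q α σ σ' D B M : ℝ} (hα : 0 ≤ α) (hαq : α ≤ q) (hσ' : 1 ≤ σ')
    (hMD : M ≤ σ * D) (hMB : M ≤ σ' * B) :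
    q * D + q * α * (B - D) + q ^ 2 * (M - B) ≤
      q * (1 + α * (σ - 1) + (q - α) * ((σ' - 1) / σ') * σ) * D := by
  have hk : 0 ≤ (σ' - 1) / σ' := div_nonneg (by linarith) (by linarith)
  have hB : M - B ≤ (σ' - 1) / σ' * M := by
    rw [div_mul_eq_mul_div, le_div_iff₀ (by linarith)]
    nlinarith
  have inner : α * M + (q - α) * (M - B) ≤ α * σ * D + (q - α) * ((σ' - 1) / σ') * σ * D := by
    nlinarith [mul_le_mul_of_nonneg_left hMD hα,
      mul_le_mul_of_nonneg_left hB (sub_nonneg.2 hαq),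
      mul_le_mul_of_nonneg_left hMD (mul_nonneg (sub_nonneg.2 hαq) hk)]
  nlinarith [mul_le_mul_of_nonneg_left inner (hα.trans hαq)]

lemma sub_one_div_sub_one_le_div {τ s : ℝ} (hτ : 0 ≤ τ) (hτs : τ ≤ s) (hs : 1 ≤ s) :
    (τ - 1) / (s - 1) ≤ τ / s := by
  rcases hs.eq_or_lt with rfl | hs
  · simpa using hτ
  rw [div_le_div_iff₀ (by linarith) (by linarith)]
  nlinarith

lemma sub_one_div_cast_max {τ s : ℕ} (hτ : 1 ≤ τ) (hτs : τ ≤ s) :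
    ((τ : ℝ) - 1) / ((max 1 (s - 1) : ℕ) : ℝ) = ((τ : ℝ) - 1) / ((s : ℝ) - 1) := by
  rcases (by omega : s = 1 ∨ 2 ≤ s) with rfl | hs
  · obtain rfl : τ = 1 := by omega
    simp
  · rw [max_eq_right (by omega), Nat.cast_sub (by omega), Nat.cast_one]

theorem stmt_15_general (c s τ : ℕ) (hτ : 1 ≤ τ) (hτs : τ ≤ s)
    (n : ℕ) (A : Matrix (Fin n) (Fin c × Fin s) ℝ)
    (σ σ' : ℝ)
    (hσ : σ = sSup {y : ℝ | ∃ x : Fin c × Fin s → ℝ,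
      (∑ p : Fin c × Fin s, (∑ j : Fin n, (A j p) ^ 2) * (x p) ^ 2) ≤ 1 ∧
      y = ∑ j : Fin n, (∑ p : Fin c × Fin s, A j p * x p) ^ 2})
    (hσ' : σ' = sSup {y : ℝ | ∃ x : Fin c × Fin s → ℝ,
      (∑ l : Fin c, ∑ j : Fin n, (∑ i : Fin s, A j (l, i) * x (l, i)) ^ 2) ≤ 1 ∧
      y = ∑ j : Fin n, (∑ p : Fin c × Fin s, A j p * x p) ^ 2})
    (h : Fin c × Fin s → ℝ) :
    (∑ S ∈ samplings c s τ,
        ∑ j : Fin n, (∑ p : Fin c × Fin s, A j p * restr S h p) ^ 2) /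
        ((s.choose τ : ℝ) ^ c) ≤
      ((τ : ℝ) / (s : ℝ)) *
        (1 + ((τ : ℝ) - 1) * (σ - 1) / ((max 1 (s - 1) : ℕ) : ℝ)
          + ((τ : ℝ) / (s : ℝ) - ((τ : ℝ) - 1) / ((max 1 (s - 1) : ℕ) : ℝ)) *
              ((σ' - 1) / σ') * σ) *
        ∑ p : Fin c × Fin s, (∑ j : Fin n, (A j p) ^ 2) * (h p) ^ 2 := by
  by_cases hA : A = 0
  · simp [hA]
  simp only [← dotProduct_transpose_mul_mulVec, ← dotProduct_diagonal_diag_transpose_mul_mulVec,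
    ← dotProduct_blockDiagPart_transpose_mul_mulVec] at hσ hσ' ⊢
  have hMD := hσ ▸ dotProduct_transpose_mul_mulVec_le_sSup_mul A
  have hMB := hσ' ▸ dotProduct_transpose_mul_mulVec_le_sSup_mul_blockDiagPart A
  obtain ⟨p, hp⟩ := exists_transpose_mul_self_apply_self_pos hA
  have hτ' : (1 : ℝ) ≤ τ := by exact_mod_cast hτ
  have hτs' : (τ : ℝ) ≤ s := by exact_mod_cast hτs
  rw [← Nat.cast_pow, ← card_samplings, ← expect_eq_sum_div_card,
    expect_samplings_restr_dotProduct_mulVec hτs, mul_div_right_comm _ (σ - 1),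
    sub_one_div_cast_max hτ hτs]
  refine (eso_combination_le (div_nonneg (by linarith) (by linarith))
    (sub_one_div_sub_one_le_div (by linarith) hτs' (by linarith))
    (one_le_of_le_mul_blockDiagPart hp hMB) (hMD h) (hMB h)).trans_eq ?_
  ring

/-- the ESO inequality underlying Lemma 3 of the paper: the
Hydra stepsizes `D²_ii = β*·∑_j A_{ji}²`.  Columns of the `n×d` matrix `A` are
indexed by `(l,i) ∈ Fin c × Fin s`, `d = c·s`, `s₁ = max(1,s−1)`, `M = AᵀA`,
`σ = sup{xᵀMx : xᵀD^M x ≤ 1}`, `σ' = sup{xᵀMx : xᵀB^M x ≤ 1}` and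
`β* = 1 + (τ−1)(σ−1)/s₁ + (τ/s − (τ−1)/s₁)·((σ'−1)/σ')·σ`.  For every `h`, the
average over all distributed samplings of `(h^Ŝ)ᵀAᵀA h^Ŝ` is at most
`(τ/s)·β*·∑_i (∑_j A_{ji}²) h_i²`. -/
theorem stmt_15 (c s τ : ℕ) (hc : 0 < c) (hs : 0 < s) (hτ : 1 ≤ τ) (hτs : τ ≤ s)
    (n : ℕ) (A : Matrix (Fin n) (Fin c × Fin s) ℝ)
    (hrows : ∀ j : Fin n, ∃ p : Fin c × Fin s, A j p ≠ 0)
    (σ σ' : ℝ)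
    (hσ : σ = sSup {y : ℝ | ∃ x : Fin c × Fin s → ℝ,
      (∑ p : Fin c × Fin s, (∑ j : Fin n, (A j p) ^ 2) * (x p) ^ 2) ≤ 1 ∧
      y = ∑ j : Fin n, (∑ p : Fin c × Fin s, A j p * x p) ^ 2})
    (hσ' : σ' = sSup {y : ℝ | ∃ x : Fin c × Fin s → ℝ,
      (∑ l : Fin c, ∑ j : Fin n, (∑ i : Fin s, A j (l, i) * x (l, i)) ^ 2) ≤ 1 ∧
      y = ∑ j : Fin n, (∑ p : Fin c × Fin s, A j p * x p) ^ 2})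
    (h : Fin c × Fin s → ℝ) :
    (∑ S ∈ samplings c s τ,
        ∑ j : Fin n, (∑ p : Fin c × Fin s, A j p * restr S h p) ^ 2) /
        ((s.choose τ : ℝ) ^ c) ≤
      ((τ : ℝ) / (s : ℝ)) *
        (1 + ((τ : ℝ) - 1) * (σ - 1) / ((max 1 (s - 1) : ℕ) : ℝ)
          + ((τ : ℝ) / (s : ℝ) - ((τ : ℝ) - 1) / ((max 1 (s - 1) : ℕ) : ℝ)) *
              ((σ' - 1) / σ') * σ) *
        ∑ p : Fin c × Fin s, (∑ j : Fin n, (A j p) ^ 2) * (h p) ^ 2 :=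
  stmt_15_general c s τ hτ hτs n A σ σ' hσ hσ' h
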